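/- Let F : ℝ → ℝ be differentiable with |F(x)| ≤ B and |F'(x)| ≤ L for all x ∈ ℝ, where B, L > 0. Let ε > 0, ΔT > 0, M ∈ ℕ, and let U : ℝ → ℝ satisfy U'(t) = ε·F(U(t)) for all t ∈ [0, M·ΔT]. Let δ ≥ 0 and let the discrete approximations U_0, U_1, …, U_M satisfy U_0 = U(0) and U_m = U_{m−1} + ε·ΔT·(F(U_{m−1}) + η_{m−1}) for m = 1, …, M, where |η_{m−1}| ≤ δ. Then the global error satisfies |U_M − U(M·ΔT)| ≤ exp(ε·L·M·ΔT) · ε·M·ΔT · (δ + ε·ΔT·L·B/2). In particular, if ε·M·ΔT ≤ K for a fixed constant K, then |U_M − U(M·ΔT)| ≤ C·(δ + ε·ΔT) with C = e^{LK}·K·max(1, LB/2) independent of ε, ΔT, δ and M. -/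

import Mathlib

/-!
Along the exact solution `U` moves at speed at most `B`, so over one step of length `h` the
vector field seen by `U` drifts by at most `K B (t - t₀)`; comparing with the boundary function
`K B (t - t₀)² / 2` bounds the Euler defect `U (t₀ + h) - U t₀ - h • G (U t₀)` by `K B h² / 2`.
The global error then obeys `eₙ₊₁ ≤ (1 + h K) eₙ + h (δ + K B h / 2)`, and the discrete Grönwall
inequality gives `e_N ≤ N h (δ + K B h / 2) exp (N h K)`. The slow ODE is the case `G = ε F`,
with Lipschitz constant `ε L`, bound `ε B` and perturbations `ε η`.
-/

open Real Set NNReal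

variable {E : Type*} [NormedAddCommGroup E] [NormedSpace ℝ E]

theorem euler_local_error_le {G : E → E} {K : ℝ≥0} {B : ℝ} (hG : LipschitzWith K G)
    (hGB : ∀ x, ‖G x‖ ≤ B) {U : ℝ → E} {t₀ h : ℝ} (hh : 0 ≤ h)
    (hU : ∀ t ∈ Icc t₀ (t₀ + h), HasDerivAt U (G (U t)) t) :
    ‖U (t₀ + h) - U t₀ - h • G (U t₀)‖ ≤ K * B * h ^ 2 / 2 := by
  have hdrift : ∀ t ∈ Icc t₀ (t₀ + h), ‖U t - U t₀‖ ≤ B * (t - t₀) :=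
    norm_image_sub_le_of_norm_deriv_le_segment' (fun t ht => (hU t ht).hasDerivWithinAt)
      fun t _ => hGB _
  have hderiv : ∀ t ∈ Icc t₀ (t₀ + h), HasDerivAt (fun s => U s - U t₀ - (s - t₀) • G (U t₀))
      (G (U t) - G (U t₀)) t := fun t ht => by
    simpa using ((hU t ht).sub_const (U t₀)).fun_sub (((hasDerivAt_id t).sub_const t₀).smul_const _)
  have hdefect := image_norm_le_of_norm_deriv_right_le_deriv_boundary
    (B := fun t => K * B / 2 * (t - t₀) ^ 2) (B' := fun t => K * B / 2 * (2 * (t - t₀)))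
    (fun t ht => (hderiv t ht).continuousAt.continuousWithinAt)
    (fun t ht => (hderiv t (Ico_subset_Icc_self ht)).hasDerivWithinAt) (by simp)
    (fun t => by simpa using (((hasDerivAt_id t).sub_const t₀).pow 2).const_mul (K * B / 2 : ℝ))
    (fun t ht => ?_) (right_mem_Icc.2 (by linarith))
  · simpa [div_mul_eq_mul_div] using hdefect
  · calc ‖G (U t) - G (U t₀)‖ ≤ K * ‖U t - U t₀‖ := hG.norm_sub_le _ _
      _ ≤ K * (B * (t - t₀)) := by gcongr; exact hdrift t (Ico_subset_Icc_self ht)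
      _ = K * B / 2 * (2 * (t - t₀)) := by ring

theorem discrete_gronwall_const {u : ℕ → ℝ} {a b : ℝ} {N : ℕ} (hu0 : u 0 = 0)
    (hu_nonneg : ∀ n, 0 ≤ u n) (ha : 0 ≤ a) (hb : 0 ≤ b)
    (hu : ∀ n < N, u (n + 1) ≤ (1 + a) * u n + b) : u N ≤ N * b * exp (N * a) := by
  -- Freezing `u` after `N` provides the recursion for every `n`, as `discrete_gronwall` needs.
  have hstep : ∀ n ≥ 0, u (min (n + 1) N) ≤ (1 + a) * u (min n N) + b := fun n _ => by
    rcases lt_or_ge n N with hn | hn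
    · simpa [min_eq_left hn.le, min_eq_left (Nat.succ_le_of_lt hn)] using hu n hn
    · rw [min_eq_right hn, min_eq_right (by omega)]
      nlinarith [hu_nonneg N]
  simpa [hu0, mul_comm] using
    discrete_gronwall (u := fun n => u (min n N)) (by simp [hu0]) hstep (fun _ _ => ha)
      (fun _ _ => hb) (Nat.zero_le N)

theorem euler_global_error_le {G : E → E} {K : ℝ≥0} {B : ℝ} (hG : LipschitzWith K G)
    (hGB : ∀ x, ‖G x‖ ≤ B) {h : ℝ} (hh : 0 ≤ h) {N : ℕ} {U : ℝ → E}
    (hU : ∀ t ∈ Icc 0 (N * h), HasDerivAt U (G (U t)) t)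
    {Y d : ℕ → E} {δ : ℝ} (hδ : 0 ≤ δ) (hY0 : Y 0 = U 0)
    (hY : ∀ n < N, Y (n + 1) = Y n + h • (G (Y n) + d n)) (hd : ∀ n < N, ‖d n‖ ≤ δ) :
    ‖Y N - U (N * h)‖ ≤ N * (h * (δ + K * B * h / 2)) * exp (N * (h * K)) := by
  have hB : 0 ≤ B := (norm_nonneg _).trans (hGB 0)
  refine discrete_gronwall_const (u := fun n => ‖Y n - U (n * h)‖) (by simp [hY0])
    (fun _ => norm_nonneg _) (by positivity) (by positivity) fun n hn => ?_
  have hstep_le : (n : ℝ) * h + h ≤ N * h := by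
    have : (n : ℝ) + 1 ≤ N := by exact_mod_cast hn
    nlinarith
  have hlocal := euler_local_error_le hG hGB hh (t₀ := n * h) fun t ht =>
    hU t ⟨(by positivity : (0 : ℝ) ≤ n * h).trans ht.1, ht.2.trans hstep_le⟩
  have hsplit : Y (n + 1) - U (↑(n + 1) * h) =
      (Y n - U (n * h)) + h • (G (Y n) - G (U (n * h))) + h • d n
        - (U (n * h + h) - U (n * h) - h • G (U (n * h))) := by
    rw [hY n hn, Nat.cast_succ, add_one_mul, smul_add, smul_sub]
    abel
  set e := Y n - U (n * h)
  calc ‖Y (n + 1) - U (↑(n + 1) * h)‖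
      ≤ ‖e‖ + ‖h • (G (Y n) - G (U (n * h)))‖ + ‖h • d n‖
        + ‖U (n * h + h) - U (n * h) - h • G (U (n * h))‖ :=
        hsplit ▸ norm_sub_le_of_le norm_add₃_le le_rfl
    _ ≤ ‖e‖ + h * (K * ‖e‖) + h * δ + K * B * h ^ 2 / 2 := by
        rw [norm_smul, norm_smul, Real.norm_of_nonneg hh]
        gcongr
        exacts [hG.norm_sub_le _ _, hd n hn]
    _ = (1 + h * K) * ‖e‖ + h * (δ + K * B * h / 2) := by ring

theorem exp_mul_mul_add_le {a x K L B δ τ : ℝ} (ha : a ≤ L * K) (hx : 0 ≤ x) (hxK : x ≤ K)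
    (hL : 0 ≤ L) (hB : 0 ≤ B) (hδ : 0 ≤ δ) (hτ : 0 ≤ τ) :
    exp a * x * (δ + τ * L * B / 2) ≤ exp (L * K) * K * max 1 (L * B / 2) * (δ + τ) := by
  have hmax : δ + τ * L * B / 2 ≤ max 1 (L * B / 2) * (δ + τ) := by
    nlinarith [le_max_left 1 (L * B / 2), le_max_right 1 (L * B / 2)]
  calc exp a * x * (δ + τ * L * B / 2) ≤ exp (L * K) * K * (max 1 (L * B / 2) * (δ + τ)) := by
        gcongr
        exact mul_nonneg (exp_pos _).le (hx.trans hxK)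
    _ = exp (L * K) * K * max 1 (L * B / 2) * (δ + τ) := by ring

theorem stmt_0_general
    (F : ℝ → ℝ) (B L : ℝ)
    (hFdiff : Differentiable ℝ F)
    (hFbound : ∀ x : ℝ, |F x| ≤ B)
    (hFlip : ∀ x : ℝ, |deriv F x| ≤ L)
    (ε ΔT : ℝ) (hε : 0 < ε) (hΔT : 0 < ΔT)
    (M : ℕ)
    (U : ℝ → ℝ)
    (hU : ∀ t ∈ Set.Icc (0 : ℝ) ((M : ℝ) * ΔT), HasDerivAt U (ε * F (U t)) t)
    (δ : ℝ) (hδ : 0 ≤ δ)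
    (Ud : ℕ → ℝ) (η : ℕ → ℝ)
    (hU0 : Ud 0 = U 0)
    (hstep : ∀ m : ℕ, m < M → Ud (m + 1) = Ud m + ε * ΔT * (F (Ud m) + η m))
    (hη : ∀ m : ℕ, m < M → |η m| ≤ δ) :
    |Ud M - U ((M : ℝ) * ΔT)| ≤
      Real.exp (ε * L * (M : ℝ) * ΔT) * (ε * (M : ℝ) * ΔT) * (δ + ε * ΔT * L * B / 2) ∧
    ∀ K : ℝ, ε * (M : ℝ) * ΔT ≤ K →
      |Ud M - U ((M : ℝ) * ΔT)| ≤
        Real.exp (L * K) * K * max 1 (L * B / 2) * (δ + ε * ΔT) := by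
  have hL : 0 ≤ L := (abs_nonneg _).trans (hFlip 0)
  have hB : 0 ≤ B := (abs_nonneg _).trans (hFbound 0)
  have hF : LipschitzWith L.toNNReal F := lipschitzWith_of_nnnorm_deriv_le hFdiff fun x => by
    rw [← NNReal.coe_le_coe, coe_nnnorm, Real.coe_toNNReal _ hL]
    exact hFlip x
  have hεF : ∀ x, ‖ε * F x‖ ≤ ε * B := fun x => by
    rw [norm_mul, Real.norm_of_nonneg hε.le]
    exact mul_le_mul_of_nonneg_left (hFbound x) hε.le
  have hG : LipschitzWith (‖ε‖₊ * L.toNNReal) fun x => ε * F x := (lipschitzWith_smul ε).comp hF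
  have hεL : ((‖ε‖₊ * L.toNNReal : ℝ≥0) : ℝ) = ε * L := by
    rw [NNReal.coe_mul, coe_nnnorm, Real.norm_of_nonneg hε.le, Real.coe_toNNReal _ hL]
  have herror := euler_global_error_le hG hεF hΔT.le hU
    (mul_nonneg hε.le hδ) hU0 (d := fun m => ε * η m)
    (fun m hm => by rw [hstep m hm, smul_eq_mul]; ring)
    (fun m hm => by simpa [abs_mul, abs_of_pos hε] using mul_le_mul_of_nonneg_left (hη m hm) hε.le)
  have hfirst : |Ud M - U (M * ΔT)| ≤
      exp (ε * L * M * ΔT) * (ε * M * ΔT) * (δ + ε * ΔT * L * B / 2) := by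
    rw [hεL, Real.norm_eq_abs] at herror
    exact herror.trans_eq (by ring_nf)
  refine ⟨hfirst, fun K hK => hfirst.trans (exp_mul_mul_add_le ?_ (by positivity) hK hL hB hδ
    (by positivity))⟩
  calc ε * L * M * ΔT = L * (ε * M * ΔT) := by ring
    _ ≤ L * K := mul_le_mul_of_nonneg_left hK hL

/-- Global error estimate for the perturbed forward Euler scheme applied to the
slow ODE `U' = ε·F(U)`: abstract form of the paper's main theorem. -/
theorem stmt_0
    (F : ℝ → ℝ) (B L : ℝ) (hB : 0 < B) (hL : 0 < L)
    (hFdiff : Differentiable ℝ F)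
    (hFbound : ∀ x : ℝ, |F x| ≤ B)
    (hFlip : ∀ x : ℝ, |deriv F x| ≤ L)
    (ε ΔT : ℝ) (hε : 0 < ε) (hΔT : 0 < ΔT)
    (M : ℕ)
    (U : ℝ → ℝ)
    (hU : ∀ t ∈ Set.Icc (0 : ℝ) ((M : ℝ) * ΔT), HasDerivAt U (ε * F (U t)) t)
    (δ : ℝ) (hδ : 0 ≤ δ)
    (Ud : ℕ → ℝ) (η : ℕ → ℝ)
    (hU0 : Ud 0 = U 0)
    (hstep : ∀ m : ℕ, m < M → Ud (m + 1) = Ud m + ε * ΔT * (F (Ud m) + η m))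
    (hη : ∀ m : ℕ, m < M → |η m| ≤ δ) :
    |Ud M - U ((M : ℝ) * ΔT)| ≤
      Real.exp (ε * L * (M : ℝ) * ΔT) * (ε * (M : ℝ) * ΔT) * (δ + ε * ΔT * L * B / 2) ∧
    ∀ K : ℝ, ε * (M : ℝ) * ΔT ≤ K →
      |Ud M - U ((M : ℝ) * ΔT)| ≤
        Real.exp (L * K) * K * max 1 (L * B / 2) * (δ + ε * ΔT) :=
  stmt_0_general F B L hFdiff hFbound hFlip ε ΔT hε hΔT M U hU δ hδ Ud η hU0 hstep hη
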